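/- arXiv:2601.15696 — 2 statements merged into one kernel-verified Lean document; each statement's English description precedes it below -/
import Mathlib

section
/- If U is a random element such that (X,Y) is conditionally independent of Z given σ(U), where U is measurable with respect to σ(Z), then X is conditionally independent of Y given Z if and only if X is conditionally independent of Y given σ(U). -/
open ProbabilityTheory MeasureTheory

/-!
Let `m' ≤ m`. If `σ(X, Y)` is independent of `m` given `m'`, then every event `A ∈ σ(X, Y)`
has `P(A | m) = P(A | m')` a.s.: for `B ∈ m`,
`∫_B P(A | m') = ∫ P(A | m') P(B | m') = ∫ P(A ∩ B | m') = P(A ∩ B)`.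
Applied to `A`, `B` and `A ∩ B` with `A ∈ σ(X)`, `B ∈ σ(Y)`, this makes the factorisations
`P(A ∩ B | ·) = P(A | ·) P(B | ·)` for `m = σ(Z)` and for `m' = σ(U)` equivalent.
-/

section

variable {Ω : Type*} {m' m m₁ m₂ mΩ : MeasurableSpace Ω} [StandardBorelSpace Ω]
  {μ : Measure Ω} [IsFiniteMeasure μ]

theorem condExp_indicator_ae_eq_of_condIndep (hm' : m' ≤ m) (hm : m ≤ mΩ) (hm₁ : m₁ ≤ mΩ)
    (h : CondIndep m' m₁ m (hm'.trans hm) μ) {s : Set Ω} (hs : MeasurableSet[m₁] s) :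
    μ⟦s | m⟧ =ᵐ[μ] μ⟦s | m'⟧ := by
  have hsΩ : MeasurableSet s := hm₁ s hs
  set g := μ⟦s | m'⟧
  refine (ae_eq_condExp_of_forall_setIntegral_eq hm ((integrable_const 1).indicator hsΩ)
    (fun _ _ _ => integrable_condExp.integrableOn) (fun t ht _ => ?_)
    (stronglyMeasurable_condExp.mono hm').aestronglyMeasurable).symm
  have htΩ : MeasurableSet t := hm t ht
  have hgt : g * t.indicator (fun _ => 1) = t.indicator g := by
    ext x; by_cases hx : x ∈ t <;> simp [hx]
  have hsplit : μ⟦s ∩ t | m'⟧ =ᵐ[μ] g * μ⟦t | m'⟧ :=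
    (condIndep_iff _ _ _ _ hm₁ hm μ).1 h s t hs ht
  have hpull : μ[t.indicator g | m'] =ᵐ[μ] g * μ⟦t | m'⟧ := by
    rw [← hgt]
    exact condExp_mul_of_stronglyMeasurable_left stronglyMeasurable_condExp
      (hgt ▸ integrable_condExp.indicator htΩ) ((integrable_const 1).indicator htΩ)
  calc ∫ x in t, g x ∂μ = ∫ x, (μ[t.indicator g | m']) x ∂μ := by
        rw [integral_condExp (hm'.trans hm), integral_indicator htΩ]
    _ = ∫ x, (μ⟦s ∩ t | m'⟧) x ∂μ := integral_congr_ae (hpull.trans hsplit.symm)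
    _ = ∫ x in t, s.indicator (fun _ => (1 : ℝ)) x ∂μ := by
        rw [integral_condExp (hm'.trans hm), integral_indicator (hsΩ.inter htΩ),
          setIntegral_indicator hsΩ, Set.inter_comm]

theorem condIndep_iff_of_condIndep_sup (hm' : m' ≤ m) (hm : m ≤ mΩ) (hm₁ : m₁ ≤ mΩ)
    (hm₂ : m₂ ≤ mΩ) (h : CondIndep m' (m₁ ⊔ m₂) m (hm'.trans hm) μ) :
    CondIndep m m₁ m₂ hm μ ↔ CondIndep m' m₁ m₂ (hm'.trans hm) μ := by
  have key {s : Set Ω} (hs : MeasurableSet[m₁ ⊔ m₂] s) : μ⟦s | m⟧ =ᵐ[μ] μ⟦s | m'⟧ :=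
    condExp_indicator_ae_eq_of_condIndep hm' hm (sup_le hm₁ hm₂) h hs
  rw [condIndep_iff _ _ _ _ hm₁ hm₂, condIndep_iff _ _ _ _ hm₁ hm₂]
  refine forall₂_congr fun t₁ t₂ => imp_congr_right fun ht₁ => imp_congr_right fun ht₂ => ?_
  have ht₁' : MeasurableSet[m₁ ⊔ m₂] t₁ := le_sup_left (a := m₁) t₁ ht₁
  have ht₂' : MeasurableSet[m₁ ⊔ m₂] t₂ := le_sup_right (a := m₁) t₂ ht₂
  have h₁ := key ht₁'
  have h₂ := key ht₂'
  have h₁₂ := key (ht₁'.inter ht₂')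
  exact ⟨fun H => h₁₂.symm.trans (H.trans (h₁.mul h₂)),
    fun H => h₁₂.trans (H.trans (h₁.symm.mul h₂.symm))⟩

end

theorem stmt0_general {Ω : Type*} {mΩ : MeasurableSpace Ω} [StandardBorelSpace Ω]
    {μ : Measure Ω} [IsFiniteMeasure μ]
    {EX EY EZ EU : Type*} [MeasurableSpace EX] [MeasurableSpace EY]
    [MeasurableSpace EZ] [MeasurableSpace EU]
    (X : Ω → EX) (Y : Ω → EY) (Z : Ω → EZ) (U : Ω → EU)
    (hX : Measurable X) (hY : Measurable Y)
    (f : EZ → EU) (hf : Measurable f) (hU : U = f ∘ Z)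
    (hmU : MeasurableSpace.comap U inferInstance ≤ mΩ)
    (hmZ : MeasurableSpace.comap Z inferInstance ≤ mΩ)
    (h : CondIndepFun (MeasurableSpace.comap U inferInstance) hmU
      (fun ω => (X ω, Y ω)) Z μ) :
    CondIndepFun (MeasurableSpace.comap Z inferInstance) hmZ X Y μ ↔
      CondIndepFun (MeasurableSpace.comap U inferInstance) hmU X Y μ := by
  have hUZ : MeasurableSpace.comap U inferInstance ≤ MeasurableSpace.comap Z inferInstance := by
    rw [hU, ← MeasurableSpace.comap_comp]
    exact MeasurableSpace.comap_mono hf.comap_le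
  rw [condIndepFun_iff_condIndep, Prod.instMeasurableSpace, MeasurableSpace.comap_prodMk] at h
  rw [condIndepFun_iff_condIndep, condIndepFun_iff_condIndep]
  exact condIndep_iff_of_condIndep_sup hUZ hmZ hX.comap_le hY.comap_le h

/-- If `U = f ∘ Z` is a measurable function of `Z` and `(X, Y)` is conditionally
independent of `Z` given `σ(U)`, then `X ⫫ Y | σ(Z)` iff `X ⫫ Y | σ(U)`. -/
theorem stmt0 {Ω : Type*} {mΩ : MeasurableSpace Ω} [StandardBorelSpace Ω]
    {μ : Measure Ω} [IsFiniteMeasure μ]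
    {EX EY EZ EU : Type*} [MeasurableSpace EX] [MeasurableSpace EY]
    [MeasurableSpace EZ] [MeasurableSpace EU]
    (X : Ω → EX) (Y : Ω → EY) (Z : Ω → EZ) (U : Ω → EU)
    (hX : Measurable X) (hY : Measurable Y) (hZ : Measurable Z)
    (f : EZ → EU) (hf : Measurable f) (hU : U = f ∘ Z)
    (hmU : MeasurableSpace.comap U inferInstance ≤ mΩ)
    (hmZ : MeasurableSpace.comap Z inferInstance ≤ mΩ)
    (h : CondIndepFun (MeasurableSpace.comap U inferInstance) hmU
      (fun ω => (X ω, Y ω)) Z μ) :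
    CondIndepFun (MeasurableSpace.comap Z inferInstance) hmZ X Y μ ↔
      CondIndepFun (MeasurableSpace.comap U inferInstance) hmU X Y μ :=
  stmt0_general X Y Z U hX hY f hf hU hmU hmZ h
end

section
/- Let A : M₁ → M₂ be a linear operator between finite-dimensional inner product spaces with orthonormal-free bases having invertible Gram matrices G₁, G₂. Then the Hilbert–Schmidt norm of A equals the Frobenius norm of G₂^{1/2} [A]_{B₂,B₁} G₁^{-1/2}. -/
/-!
With respect to the Gram matrices `G₁`, `G₂` the adjoint has matrix `G₁⁻¹ Nᴴ G₂`, where `N` is the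
matrix of `A`, so `tr (A* A) = tr (G₁⁻¹ Nᴴ G₂ N)`. Writing `G = S * S` with `S` the Hermitian
square root and cycling the trace turns this into `tr (Mᴴ M)` for `M = S₂ N S₁⁻¹`, which is the
sum of the squared entries of `M`.
-/

open RealInnerProductSpace Matrix
open scoped MatrixOrder ComplexOrder InnerProductSpace

namespace Matrix

variable {ι κ 𝕜 R : Type*} [Fintype ι] [Fintype κ]

theorem PosSemidef.cfc_sqrt_eq_sqrt [DecidableEq ι] [RCLike 𝕜] {A : Matrix ι ι 𝕜}
    (hA : A.PosSemidef) : hA.1.cfc Real.sqrt = CFC.sqrt A := by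
  rw [← hA.1.cfc_eq, CFC.sqrt_eq_real_sqrt A hA.nonneg, cfcₙ_eq_cfc]

theorem isHermitian_sqrt [DecidableEq ι] [RCLike 𝕜] (A : Matrix ι ι 𝕜) :
    (CFC.sqrt A).IsHermitian :=
  (CFC.sqrt_nonneg A).isSelfAdjoint

theorem sum_sq_eq_trace_conjTranspose_mul_self (M : Matrix κ ι ℝ) :
    ∑ i, ∑ j, M i j ^ 2 = (Mᴴ * M).trace := by
  simp only [trace, diag_apply, mul_apply, conjTranspose_apply, star_trivial, sq]
  exact Finset.sum_comm

theorem trace_conjTranspose_mul_self_mul_mul_inv [DecidableEq ι] [CommRing R] [StarRing R]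
    {S₁ : Matrix ι ι R} {S₂ : Matrix κ κ R} (h₁ : S₁.IsHermitian) (h₂ : S₂.IsHermitian)
    (N : Matrix κ ι R) :
    ((S₂ * N * S₁⁻¹)ᴴ * (S₂ * N * S₁⁻¹)).trace = ((S₁ * S₁)⁻¹ * (Nᴴ * (S₂ * S₂) * N)).trace := by
  rw [conjTranspose_mul, conjTranspose_mul, conjTranspose_nonsing_inv, h₁.eq, h₂.eq, mul_inv_rev]
  simp only [Matrix.mul_assoc]
  rw [← Matrix.mul_assoc S₁⁻¹ S₁⁻¹, trace_mul_comm (S₁⁻¹ * S₁⁻¹), trace_mul_comm S₁⁻¹]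
  simp only [Matrix.mul_assoc]

end Matrix

namespace Module.Basis

variable {ι E 𝕜 : Type*} [Fintype ι] [RCLike 𝕜] [NormedAddCommGroup E] [InnerProductSpace 𝕜 E]

theorem inner_apply_left_eq_sum_gram_mul_repr (b : Basis ι 𝕜 E) (x : E) (i : ι) :
    ⟪b i, x⟫_𝕜 = ∑ l, gram 𝕜 b i l * b.repr x l := by
  conv_lhs => rw [← b.sum_repr x]
  simp only [inner_sum, inner_smul_right, gram_apply, mul_comm]

theorem inner_apply_right_eq_sum_star_repr_mul_gram (b : Basis ι 𝕜 E) (x : E) (j : ι) :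
    ⟪x, b j⟫_𝕜 = ∑ l, star (b.repr x l) * gram 𝕜 b l j := by
  conv_lhs => rw [← b.sum_repr x]
  simp only [sum_inner, inner_smul_left, gram_apply, RCLike.star_def]

end Module.Basis

namespace LinearMap

variable {ι κ E F 𝕜 : Type*} [Fintype ι] [Fintype κ] [DecidableEq ι] [DecidableEq κ] [RCLike 𝕜]
  [NormedAddCommGroup E] [InnerProductSpace 𝕜 E] [FiniteDimensional 𝕜 E]
  [NormedAddCommGroup F] [InnerProductSpace 𝕜 F] [FiniteDimensional 𝕜 F]

theorem gram_mul_toMatrix_adjoint (b₁ : Module.Basis ι 𝕜 E) (b₂ : Module.Basis κ 𝕜 F)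
    (f : E →ₗ[𝕜] F) :
    gram 𝕜 b₁ * toMatrix b₂ b₁ (adjoint f) = (toMatrix b₁ b₂ f)ᴴ * gram 𝕜 b₂ := by
  ext i j
  calc (gram 𝕜 b₁ * toMatrix b₂ b₁ (adjoint f)) i j = ⟪b₁ i, adjoint f (b₂ j)⟫_𝕜 := by
        rw [b₁.inner_apply_left_eq_sum_gram_mul_repr, mul_apply]
        simp only [toMatrix_apply]
    _ = ⟪f (b₁ i), b₂ j⟫_𝕜 := adjoint_inner_right f _ _
    _ = ((toMatrix b₁ b₂ f)ᴴ * gram 𝕜 b₂) i j := by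
        rw [b₂.inner_apply_right_eq_sum_star_repr_mul_gram, mul_apply]
        simp only [conjTranspose_apply, toMatrix_apply]

theorem trace_adjoint_comp_self (b₁ : Module.Basis ι 𝕜 E) (b₂ : Module.Basis κ 𝕜 F)
    (f : E →ₗ[𝕜] F) :
    trace 𝕜 E (adjoint f ∘ₗ f) =
      ((gram 𝕜 b₁)⁻¹ * ((toMatrix b₁ b₂ f)ᴴ * gram 𝕜 b₂ * toMatrix b₁ b₂ f)).trace := by
  have : Invertible (gram 𝕜 b₁) :=
    (posDef_gram_of_linearIndependent b₁.linearIndependent).isUnit.invertible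
  rw [trace_eq_matrix_trace 𝕜 b₁, toMatrix_comp b₁ b₂ b₁, ← gram_mul_toMatrix_adjoint,
    Matrix.mul_assoc, inv_mul_cancel_left_of_invertible]

end LinearMap

/-- HS–F identity: for a linear operator `A : M₁ → M₂` between finite-dimensional inner
product spaces whose bases have (positive definite) Gram matrices `G₁, G₂`, the
Hilbert–Schmidt norm of `A` (i.e. `√tr(A*A)`) equals the Frobenius norm of
`G₂^{1/2} [A] G₁^{-1/2}`. -/
theorem stmt7 {M₁ M₂ : Type*}
    [NormedAddCommGroup M₁] [InnerProductSpace ℝ M₁] [FiniteDimensional ℝ M₁]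
    [NormedAddCommGroup M₂] [InnerProductSpace ℝ M₂] [FiniteDimensional ℝ M₂]
    {m k : ℕ} (B₁ : Module.Basis (Fin m) ℝ M₁) (B₂ : Module.Basis (Fin k) ℝ M₂)
    (A : M₁ →ₗ[ℝ] M₂)
    (G₁ : Matrix (Fin m) (Fin m) ℝ) (hG₁entries : ∀ i j, G₁ i j = ⟪B₁ i, B₁ j⟫)
    (G₂ : Matrix (Fin k) (Fin k) ℝ) (hG₂entries : ∀ i j, G₂ i j = ⟪B₂ i, B₂ j⟫)
    (hG₁ : G₁.PosDef) (hG₂ : G₂.PosDef) :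
    Real.sqrt (LinearMap.trace ℝ M₁ (LinearMap.adjoint A ∘ₗ A))
      = Real.sqrt (∑ i, ∑ j,
          ((hG₂.posSemidef.1.cfc Real.sqrt * LinearMap.toMatrix B₁ B₂ A * (hG₁.posSemidef.1.cfc Real.sqrt)⁻¹) i j) ^ 2)
    := by
  obtain rfl : G₁ = gram ℝ B₁ := Matrix.ext hG₁entries
  obtain rfl : G₂ = gram ℝ B₂ := Matrix.ext hG₂entries
  rw [hG₁.posSemidef.cfc_sqrt_eq_sqrt, hG₂.posSemidef.cfc_sqrt_eq_sqrt,
    sum_sq_eq_trace_conjTranspose_mul_self,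
    trace_conjTranspose_mul_self_mul_mul_inv (isHermitian_sqrt _) (isHermitian_sqrt _),
    CFC.sqrt_mul_sqrt_self _ hG₁.posSemidef.nonneg, CFC.sqrt_mul_sqrt_self _ hG₂.posSemidef.nonneg,
    LinearMap.trace_adjoint_comp_self B₁ B₂]
end
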